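/- arXiv:1802.00818 — 3 statements merged into one kernel-verified Lean document; each statement's English description precedes it below -/
import Mathlib

section
/- Let a₁, a₂, a₃ be a basis of ℝ³ with V_r = a₁ · (a₂ × a₃), and let b₁, …, b_{2N} be an exchange drive all of whose steps lie in the lattice ℤa₁ + ℤa₂ + ℤa₃. Then the characteristic vector G = (2π/V_r) Σ_{n=1}^{2N−1} (−1)ⁿ (d_n × b_{n+1}) satisfies G · a_k ∈ 2πℤ for k = 1, 2, 3; that is, G is a vector of the reciprocal lattice. -/
open Matrix Finset

infixl:74 " ×₃ " => crossProduct

/-- The displacement vector after `n` steps of a 3D exchange drive: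
`d_n = Σ_{k=1}^{n} (−1)^{k+1} b_k`. -/
noncomputable def disp3 (b : ℕ → Fin 3 → ℝ) (n : ℕ) : Fin 3 → ℝ :=
  ∑ k ∈ Finset.Icc 1 n, (-1 : ℝ) ^ (k + 1) • b k

/-- The characteristic sum `S(b) = Σ_{n=1}^{2N−1} (−1)ⁿ (d_n × b_{n+1})` of a 3D
exchange drive of length `2N`. -/
noncomputable def charSum (N : ℕ) (b : ℕ → Fin 3 → ℝ) : Fin 3 → ℝ :=
  ∑ n ∈ Finset.Icc 1 (2 * N - 1), (-1 : ℝ) ^ n • ((disp3 b n) ×₃ (b (n + 1)))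

/-!
Every term of the characteristic sum is a triple product `(d_n × b_{n+1}) · r` of three
lattice vectors, and the determinant of any three lattice vectors is an integer multiple of
the cell volume `V_r = det (a₁, a₂, a₃)`, because their coordinate matrix in the basis
`a₁, a₂, a₃` has integer entries. Hence `S(b) · r ∈ ℤ V_r` and `G · r ∈ 2πℤ`.
-/

theorem Matrix.det_mem_zmultiples_det_of_mem_span {n R : Type*} [Fintype n] [DecidableEq n]
    [CommRing R] (A M : Matrix n n R) (hM : ∀ i, M i ∈ Submodule.span ℤ (Set.range A)) :
    M.det ∈ AddSubgroup.zmultiples A.det := by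
  choose C hC using fun i => (Submodule.mem_span_range_iff_exists_fun ℤ).mp (hM i)
  have hM_eq : M = ((Matrix.of C).map fun x ↦ (x : R)) * A := by
    ext i j
    simp [← hC i, Matrix.mul_apply, Finset.sum_apply, zsmul_eq_mul]
  refine AddSubgroup.mem_zmultiples_iff.mpr ⟨(Matrix.of C).det, ?_⟩
  rw [hM_eq, det_mul, ← Int.cast_det, zsmul_eq_mul]

theorem cross_dotProduct_mem_zmultiples {a₁ a₂ a₃ x y z : Fin 3 → ℝ}
    (hx : x ∈ Submodule.span ℤ {a₁, a₂, a₃}) (hy : y ∈ Submodule.span ℤ {a₁, a₂, a₃})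
    (hz : z ∈ Submodule.span ℤ {a₁, a₂, a₃}) :
    (x ×₃ y) ⬝ᵥ z ∈ AddSubgroup.zmultiples (a₁ ⬝ᵥ (a₂ ×₃ a₃)) := by
  rw [dotProduct_comm (x ×₃ y), triple_product_eq_det, triple_product_eq_det]
  refine det_mem_zmultiples_det_of_mem_span _ _ fun i => ?_
  rw [range_cons, range_cons, range_cons_empty, Set.singleton_union, Set.singleton_union]
  fin_cases i <;> assumption

theorem neg_one_pow_smul_mem {R M S : Type*} [Ring R] [AddCommGroup M] [Module R M]
    [SetLike S M] [AddSubgroupClass S M] {L : S} {v : M} (hv : v ∈ L) (k : ℕ) :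
    (-1 : R) ^ k • v ∈ L := by
  rcases neg_one_pow_eq_or R k with h | h <;> simp [h, hv]

theorem disp3_mem {S : Type*} [SetLike S (Fin 3 → ℝ)] [AddSubgroupClass S (Fin 3 → ℝ)] {L : S}
    {b : ℕ → Fin 3 → ℝ} {n : ℕ} (hb : ∀ k, 1 ≤ k → k ≤ n → b k ∈ L) : disp3 b n ∈ L :=
  sum_mem fun k hk => neg_one_pow_smul_mem (hb k (mem_Icc.mp hk).1 (mem_Icc.mp hk).2) _

theorem charSum_dotProduct_mem_zmultiples {a₁ a₂ a₃ r : Fin 3 → ℝ} {N : ℕ}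
    {b : ℕ → Fin 3 → ℝ} (hb : ∀ n, 1 ≤ n → n ≤ 2 * N → b n ∈ Submodule.span ℤ {a₁, a₂, a₃})
    (hr : r ∈ Submodule.span ℤ {a₁, a₂, a₃}) :
    charSum N b ⬝ᵥ r ∈ AddSubgroup.zmultiples (a₁ ⬝ᵥ (a₂ ×₃ a₃)) := by
  rw [charSum, sum_dotProduct]
  refine AddSubgroup.sum_mem _ fun n hn => ?_
  rw [mem_Icc] at hn
  have hd : disp3 b n ∈ Submodule.span ℤ {a₁, a₂, a₃} :=
    disp3_mem fun k hk hkn => hb k hk (by omega)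
  rw [smul_dotProduct]
  exact neg_one_pow_smul_mem
    (cross_dotProduct_mem_zmultiples hd (hb (n + 1) (by omega) (by omega)) hr) n

theorem stmt_4_general (a₁ a₂ a₃ : Fin 3 → ℝ)
    (N : ℕ) (b : ℕ → Fin 3 → ℝ)
    (hlat : ∀ n, 1 ≤ n → n ≤ 2 * N →
      ∃ p q r : ℤ, b n = (p : ℝ) • a₁ + (q : ℝ) • a₂ + (r : ℝ) • a₃) :
    ∀ a ∈ ({a₁, a₂, a₃} : Set (Fin 3 → ℝ)),
      ∃ m : ℤ,
        ((2 * Real.pi / (a₁ ⬝ᵥ (a₂ ×₃ a₃))) • charSum N b) ⬝ᵥ a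
          = 2 * Real.pi * (m : ℝ) := by
  intro a ha
  have hb : ∀ n, 1 ≤ n → n ≤ 2 * N → b n ∈ Submodule.span ℤ {a₁, a₂, a₃} := by
    intro n hn hnN
    obtain ⟨p, q, r, hbn⟩ := hlat n hn hnN
    exact Submodule.mem_span_triple.mpr ⟨p, q, r, by simp only [hbn, Int.cast_smul_eq_zsmul]⟩
  obtain ⟨m, hm⟩ := AddSubgroup.mem_zmultiples_iff.mp
    (charSum_dotProduct_mem_zmultiples hb (Submodule.subset_span ha))
  rcases eq_or_ne (a₁ ⬝ᵥ (a₂ ×₃ a₃)) 0 with hV | hV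
  · -- junk value `2π / 0 = 0`: then `G = 0`
    exact ⟨0, by simp [hV]⟩
  · refine ⟨m, ?_⟩
    rw [smul_dotProduct, ← hm, zsmul_eq_mul, smul_eq_mul]
    field_simp

/-- For a basis `a₁, a₂, a₃` of `ℝ³` with `V_r = a₁ ⬝ᵥ (a₂ × a₃)`, and an
exchange drive `b₁, …, b_{2N}` all of whose steps lie in the lattice `ℤa₁ + ℤa₂ + ℤa₃`,
the characteristic vector `G = (2π/V_r) Σ_{n=1}^{2N−1} (−1)ⁿ (d_n × b_{n+1})` satisfies
`G ⬝ᵥ a_k ∈ 2πℤ` for each `k = 1, 2, 3`: it is a vector of the reciprocal lattice. -/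
theorem stmt_4 (a₁ a₂ a₃ : Fin 3 → ℝ)
    (hli : LinearIndependent ℝ ![a₁, a₂, a₃])
    (hsp : Submodule.span ℝ ({a₁, a₂, a₃} : Set (Fin 3 → ℝ)) = ⊤)
    (N : ℕ) (b : ℕ → Fin 3 → ℝ)
    (hlat : ∀ n, 1 ≤ n → n ≤ 2 * N →
      ∃ p q r : ℤ, b n = (p : ℝ) • a₁ + (q : ℝ) • a₂ + (r : ℝ) • a₃) :
    ∀ a ∈ ({a₁, a₂, a₃} : Set (Fin 3 → ℝ)),
      ∃ m : ℤ,
        ((2 * Real.pi / (a₁ ⬝ᵥ (a₂ ×₃ a₃))) • charSum N b) ⬝ᵥ a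
          = 2 * Real.pi * (m : ℝ) :=
  stmt_4_general a₁ a₂ a₃ N b hlat
end

section
/- Let b₁, …, b_{2N} ∈ ℤ^D be the steps of an exchange drive of even length. The composite exchange permutation π_{b_{2N}} ∘ ⋯ ∘ π_{b_1} of ℤ^D × {A, B} is the identity permutation if and only if Σ_{n=1}^{2N} (−1)^{n+1} b_n = 0. -/
/-- The two sublattices `A` and `B` of the two-site unit cell. -/
inductive SubSite : Type
  | A : SubSite
  | B : SubSite

/-- The exchange permutation `π_b` of `ℤ^D × {A, B}`: it maps `(r, A) ↦ (r + b, B)`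
and `(r, B) ↦ (r − b, A)`, modeling the exchange of the on-site states at `(r, A)`
and `(r + b, B)`. -/
def exch {D : ℕ} (b : Fin D → ℤ) : (Fin D → ℤ) × SubSite → (Fin D → ℤ) × SubSite
  | (r, SubSite.A) => (r + b, SubSite.B)
  | (r, SubSite.B) => (r - b, SubSite.A)

/-- The composite exchange permutation `π_{b_m} ∘ ⋯ ∘ π_{b_1}` of the first `m` steps
of an exchange drive. -/
def driveMap {D : ℕ} (b : ℕ → Fin D → ℤ) :
    ℕ → ((Fin D → ℤ) × SubSite → (Fin D → ℤ) × SubSite)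
  | 0 => id
  | n + 1 => exch (b (n + 1)) ∘ driveMap b n

/-!
Two consecutive exchanges `π_c ∘ π_b` fix the sublattice label and translate the `A` sites by
`b − c` and the `B` sites by `c − b`. Grouping the `2N` steps in pairs, the drive therefore
translates `A` by the alternating step sum `S` and `B` by `−S`, so it is the identity exactly
when `S = 0`.
-/

namespace SubSite

/-- The direction in which a sublattice is translated by a pair of exchanges. -/
def sign : SubSite → ℤ
  | A => 1
  | B => -1

end SubSite

open SubSite

lemma exch_exch {D : ℕ} (b c r : Fin D → ℤ) (s : SubSite) :
    exch c (exch b (r, s)) = (r + s.sign • (b - c), s) := by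
  cases s <;> simp only [exch, sign] <;> congr 1 <;> abel

lemma sum_Icc_two_mul_succ_alternating {M : Type*} [AddCommGroup M] (b : ℕ → M) (N : ℕ) :
    ∑ n ∈ Finset.Icc 1 (2 * (N + 1)), (-1 : ℤ) ^ (n + 1) • b n
      = ∑ n ∈ Finset.Icc 1 (2 * N), (-1 : ℤ) ^ (n + 1) • b n + (b (2 * N + 1) - b (2 * N + 2)) := by
  rw [show 2 * (N + 1) = 2 * N + 1 + 1 by ring, Finset.sum_Icc_succ_top (by omega),
    Finset.sum_Icc_succ_top (by omega)]
  have h_odd : (-1 : ℤ) ^ (2 * N + 1 + 1) = 1 := Even.neg_one_pow ⟨N + 1, by ring⟩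
  have h_even : (-1 : ℤ) ^ (2 * N + 1 + 1 + 1) = -1 := by rw [pow_succ, h_odd, one_mul]
  rw [h_odd, h_even, one_smul, neg_one_smul, add_assoc, sub_eq_add_neg]

lemma driveMap_two_mul {D : ℕ} (b : ℕ → Fin D → ℤ) (N : ℕ) (r : Fin D → ℤ) (s : SubSite) :
    driveMap b (2 * N) (r, s)
      = (r + s.sign • ∑ n ∈ Finset.Icc 1 (2 * N), (-1 : ℤ) ^ (n + 1) • b n, s) := by
  induction N with
  | zero => simp [driveMap]
  | succ N ih =>
    change exch (b (2 * N + 2)) (exch (b (2 * N + 1)) (driveMap b (2 * N) (r, s))) = _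
    rw [ih, exch_exch, sum_Icc_two_mul_succ_alternating, smul_add, add_assoc]

/-- For steps `b₁, …, b_{2N} ∈ ℤ^D`, the composite exchange
permutation `π_{b_{2N}} ∘ ⋯ ∘ π_{b_1}` of `ℤ^D × {A, B}` is the identity if and only if
the alternating step sum vanishes: `Σ_{n=1}^{2N} (−1)^{n+1} b_n = 0`. -/
theorem stmt_12 (D N : ℕ) (b : ℕ → Fin D → ℤ) :
    driveMap b (2 * N) = id
      ↔ ∑ n ∈ Finset.Icc 1 (2 * N), (-1 : ℤ) ^ (n + 1) • b n = 0 := by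
  constructor
  · intro h
    have h_origin := driveMap_two_mul b N 0 A
    rw [h] at h_origin
    simpa [sign, eq_comm] using congrArg Prod.fst h_origin
  · intro h
    funext ⟨r, s⟩
    rw [driveMap_two_mul, h, smul_zero, add_zero, id]
end

section
/- Let H = {(x, y) ∈ ℤ² : y ≥ 0} and, for b ∈ ℤ², let π_b^H be the involution of H × {A, B} defined by π_b^H(r, A) = (r + b, B) if r + b ∈ H and (r, A) otherwise, and π_b^H(r, B) = (r − b, A) if r − b ∈ H and (r, B) otherwise. Take the model drive b₁ = (−1, −1), b₂ = (0, −1), b₃ = (0, 0), b₄ = (−1, 0), and let W = π_{b₄}^H ∘ π_{b₃}^H ∘ π_{b₂}^H ∘ π_{b₁}^H. Then W fixes every point ((x, y), B) with y ≥ 0, fixes every point ((x, y), A) with y ≥ 1, and maps ((x, 0), A) to ((x + 1, 0), A). That is, in the bulk W is the identity, while on the boundary row it acts as a translation of the A-sublattice states by one site. -/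
/-- The exchange step `π_b^H` on the half-plane `H = {(x, y) ∈ ℤ² : y ≥ 0}`: it maps
`(r, A) ↦ (r + b, B)` when `r + b ∈ H` (and fixes `(r, A)` otherwise), and maps
`(r, B) ↦ (r − b, A)` when `r − b ∈ H` (and fixes `(r, B)` otherwise). -/
def piH (b : ℤ × ℤ) : (ℤ × ℤ) × SubSite → (ℤ × ℤ) × SubSite
  | (r, SubSite.A) => if 0 ≤ (r + b).2 then (r + b, SubSite.B) else (r, SubSite.A)
  | (r, SubSite.B) => if 0 ≤ (r - b).2 then (r - b, SubSite.A) else (r, SubSite.B)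

/-- For the model four-step drive `b₁ = (−1,−1)`, `b₂ = (0,−1)`,
`b₃ = (0,0)`, `b₄ = (−1,0)` on the half-plane `y ≥ 0`, the composite
`W = π_{b₄}^H ∘ π_{b₃}^H ∘ π_{b₂}^H ∘ π_{b₁}^H` fixes every point `((x, y), B)` with
`y ≥ 0` and every point `((x, y), A)` with `y ≥ 1`, while it maps `((x, 0), A)` to
`((x + 1, 0), A)`: the bulk action is the identity and the boundary row is translated
by one site. -/
theorem stmt_13 (W : (ℤ × ℤ) × SubSite → (ℤ × ℤ) × SubSite)
    (hW : W = piH (-1, 0) ∘ piH (0, 0) ∘ piH (0, -1) ∘ piH (-1, -1)) :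
    (∀ x y : ℤ, 0 ≤ y → W ((x, y), SubSite.B) = ((x, y), SubSite.B))
    ∧ (∀ x y : ℤ, 1 ≤ y → W ((x, y), SubSite.A) = ((x, y), SubSite.A))
    ∧ (∀ x : ℤ, W ((x, 0), SubSite.A) = ((x + 1, 0), SubSite.A)) := by
  subst hW
  refine ⟨fun x y hy => ?_, fun x y hy => ?_, fun x => ?_⟩
  · simp only [Function.comp, piH, Prod.mk_add_mk, Prod.mk_sub_mk]
    split_ifs <;> simp_all <;> try omega
  · have h1 : (0:ℤ) ≤ y + -1 := by omega
    have h2 : (0:ℤ) ≤ y := by omega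
    simp [Function.comp, piH, h1, h2]
  · norm_num [Function.comp, piH]
end
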